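/- arXiv:1006.2390 — 2 statements merged into one kernel-verified Lean document; each statement's English description precedes it below -/
import Mathlib

section
/- Let A > 0. Every solution φ of the ODE φ'' - (1/τ)·φ' - A²·τ·φ = 0 on an interval (−δ, 0) (with δ > 0) that remains bounded as τ → 0⁻ converges to a finite limit as τ → 0⁻. -/
/-!
The equation says `(φ'/τ)' = A² φ`. Boundedness of `φ` therefore bounds the derivative of
`φ'/τ`, so `φ'/τ` is bounded on the finite interval `(-δ, 0)`, and hence so is `φ' = τ · (φ'/τ)`.
A function with `|φ'| ≤ C` differs from the monotone bounded function `φ + C τ` by a continuous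
one, so it has a limit at the endpoint.
-/

open Filter Set Topology

section BoundedDerivative

variable {f f' : ℝ → ℝ} {a b C : ℝ}

theorem exists_abs_le_of_hasDerivAt_of_abs_deriv_le
    (hf : ∀ x ∈ Ioo a b, HasDerivAt f (f' x) x) (hf' : ∀ x ∈ Ioo a b, |f' x| ≤ C) :
    ∃ K, ∀ x ∈ Ioo a b, |f x| ≤ K := by
  rcases (Ioo a b).eq_empty_or_nonempty with h | ⟨x₀, hx₀⟩
  · exact ⟨0, by simp [h]⟩
  refine ⟨|f x₀| + C * (b - a), fun x hx => ?_⟩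
  have hC : 0 ≤ C := (abs_nonneg _).trans (hf' x₀ hx₀)
  have hlip : |f x - f x₀| ≤ C * |x - x₀| := by
    simpa using (convex_Ioo a b).norm_image_sub_le_of_norm_hasDerivWithin_le
      (fun y hy => (hf y hy).hasDerivWithinAt) (fun y hy => by simpa using hf' y hy) hx₀ hx
  have hdist : |x - x₀| ≤ b - a :=
    abs_sub_le_iff.2 ⟨by linarith [hx.2, hx₀.1], by linarith [hx.1, hx₀.2]⟩
  calc |f x| ≤ |f x₀| + |f x - f x₀| := by linarith [abs_sub_abs_le_abs_sub (f x) (f x₀)]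
    _ ≤ |f x₀| + C * (b - a) := by gcongr; exact hlip.trans (by gcongr)

theorem exists_tendsto_nhdsLT_of_hasDerivAt_of_abs_deriv_le (hab : a < b)
    (hf : ∀ x ∈ Ioo a b, HasDerivAt f (f' x) x) (hf' : ∀ x ∈ Ioo a b, |f' x| ≤ C) :
    ∃ L, Tendsto f (𝓝[<] b) (𝓝 L) := by
  obtain ⟨K, hK⟩ := exists_abs_le_of_hasDerivAt_of_abs_deriv_le hf hf'
  have hne : (Ioo a b).Nonempty := nonempty_Ioo.2 hab
  have hC : 0 ≤ C := (abs_nonneg _).trans (hf' _ hne.some_mem)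
  set g : ℝ → ℝ := fun x => f x + C * x
  have hg : ∀ x ∈ Ioo a b, HasDerivAt g (f' x + C) x := fun x hx =>
    ((hf x hx).add ((hasDerivAt_id x).const_mul C)).congr_deriv (by rw [mul_one])
  have hmono : MonotoneOn g (Ioo a b) := by
    refine monotoneOn_of_hasDerivWithinAt_nonneg (f' := fun x => f' x + C) (convex_Ioo a b)
      (fun x hx => (hg x hx).continuousAt.continuousWithinAt) (fun x hx => ?_) (fun x hx => ?_)
    · rw [interior_Ioo] at hx ⊢
      exact (hg x hx).hasDerivWithinAt
    · rw [interior_Ioo] at hx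
      linarith [neg_abs_le (f' x), hf' x hx]
  have hbdd : BddAbove (g '' Ioo a b) := by
    refine ⟨K + C * b, ?_⟩
    rintro _ ⟨x, hx, rfl⟩
    have : C * x ≤ C * b := mul_le_mul_of_nonneg_left hx.2.le hC
    linarith [le_abs_self (f x), hK x hx]
  have hlin : Tendsto (fun x => C * x) (𝓝[<] b) (𝓝 (C * b)) :=
    ((continuous_const_mul C).tendsto b).mono_left nhdsWithin_le_nhds
  have hg_lim := MonotoneOn.tendsto_nhdsWithin_Ioo_left hne hmono hbdd
  exact ⟨_, (hg_lim.sub hlin).congr fun x => by simp [g]⟩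

end BoundedDerivative

theorem hasDerivAt_div_id_of_deriv_sub_eq {u u' : ℝ → ℝ} {τ c : ℝ} (hτ : τ ≠ 0)
    (hu : HasDerivAt u (u' τ) τ) (h : u' τ - (1 / τ) * u τ = τ * c) :
    HasDerivAt (fun t => u t / t) c τ := by
  refine (hu.div (hasDerivAt_id' τ) hτ).congr_deriv ?_
  field_simp at h ⊢
  linear_combination h

theorem stmt5_general (A δ : ℝ) (hδ : 0 < δ) (φ φ' φ'' : ℝ → ℝ)
    (hφ : ∀ τ ∈ Set.Ioo (-δ) 0, HasDerivAt φ (φ' τ) τ)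
    (hφ' : ∀ τ ∈ Set.Ioo (-δ) 0, HasDerivAt φ' (φ'' τ) τ)
    (hODE : ∀ τ ∈ Set.Ioo (-δ) 0, φ'' τ - (1 / τ) * φ' τ - A ^ 2 * τ * φ τ = 0)
    (hbdd : ∃ M, ∀ τ ∈ Set.Ioo (-δ) 0, |φ τ| ≤ M) :
    ∃ L, Tendsto φ (nhdsWithin 0 (Set.Iio 0)) (nhds L) := by
  obtain ⟨M, hM⟩ := hbdd
  have hψ : ∀ τ ∈ Ioo (-δ) 0, HasDerivAt (fun t => φ' t / t) (A ^ 2 * φ τ) τ := fun τ hτ =>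
    hasDerivAt_div_id_of_deriv_sub_eq hτ.2.ne (hφ' τ hτ) (by linear_combination hODE τ hτ)
  obtain ⟨K, hK⟩ := exists_abs_le_of_hasDerivAt_of_abs_deriv_le hψ (C := A ^ 2 * M)
    fun τ hτ => by
      rw [abs_mul, abs_sq]
      exact mul_le_mul_of_nonneg_left (hM τ hτ) (sq_nonneg A)
  have hφ'_le : ∀ τ ∈ Ioo (-δ) 0, |φ' τ| ≤ δ * K := fun τ hτ => by
    have hτδ : |τ| ≤ δ := abs_le.2 ⟨hτ.1.le, by linarith [hτ.2]⟩
    calc |φ' τ| = |τ| * |φ' τ / τ| := by rw [← abs_mul, mul_div_cancel₀ _ hτ.2.ne]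
      _ ≤ δ * K := mul_le_mul hτδ (hK τ hτ) (abs_nonneg _) hδ.le
  exact exists_tendsto_nhdsLT_of_hasDerivAt_of_abs_deriv_le (neg_lt_zero.2 hδ) hφ hφ'_le

/-- every bounded solution of φ'' - (1/τ)φ' - A²τφ = 0 on (-δ,0)
converges to a finite limit as τ → 0⁻. -/
theorem stmt5 (A δ : ℝ) (hA : 0 < A) (hδ : 0 < δ) (φ φ' φ'' : ℝ → ℝ)
    (hφ : ∀ τ ∈ Set.Ioo (-δ) 0, HasDerivAt φ (φ' τ) τ)
    (hφ' : ∀ τ ∈ Set.Ioo (-δ) 0, HasDerivAt φ' (φ'' τ) τ)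
    (hODE : ∀ τ ∈ Set.Ioo (-δ) 0, φ'' τ - (1 / τ) * φ' τ - A ^ 2 * τ * φ τ = 0)
    (hbdd : ∃ M, ∀ τ ∈ Set.Ioo (-δ) 0, |φ τ| ≤ M) :
    ∃ L, Tendsto φ (nhdsWithin 0 (Set.Iio 0)) (nhds L) :=
  stmt5_general A δ hδ φ φ' φ'' hφ hφ' hODE hbdd
end

section
/- Let g : (-δ, 0) → ℝ be continuous with g(τ) = G + O(τ²) as τ → 0⁻ for some constant G, and suppose π solves π'' - (2/τ)·π' + q²·π = g(τ) on (-δ, 0) with q > 0 and π bounded near 0. Then π converges to a finite limit as τ → 0⁻. -/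
/-!
For `τ < 0` the friction term `-(2/τ) π'` of the equation is dissipative: the energy
`E = π'² + q² π²` satisfies `E' = (4/τ) π'² + 2 π' g ≤ A (E + 1)` whenever `|g| ≤ A`.
Grönwall's inequality therefore bounds `E`, hence `π'`, on `[a, 0)`, so `π` is Lipschitz there
and extends continuously to `τ = 0`.
-/

open Filter Set Topology

theorem abs_le_add_of_abs_sub_le_mul_sq {x G C t d : ℝ} (h : |x - G| ≤ C * t ^ 2)
    (ht : |t| ≤ d) : |x| ≤ |G| + |C| * d ^ 2 := by
  have hsq : t ^ 2 ≤ d ^ 2 := sq_le_sq' (abs_le.mp ht).1 (abs_le.mp ht).2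
  calc |x| = |G + (x - G)| := by ring_nf
    _ ≤ |G| + |x - G| := abs_add_le _ _
    _ ≤ |G| + |C| * d ^ 2 := by
        gcongr
        calc |x - G| ≤ C * t ^ 2 := h
          _ ≤ |C| * t ^ 2 := by gcongr; exact le_abs_self C
          _ ≤ |C| * d ^ 2 := by gcongr

theorem LipschitzOnWith.exists_tendsto_nhdsWithin {α : Type*} [PseudoMetricSpace α]
    {f : α → ℝ} {s : Set α} {K : NNReal} (hf : LipschitzOnWith K f s) (x : α) :
    ∃ L, Tendsto f (𝓝[s] x) (𝓝 L) := by
  obtain ⟨g, hg, hfg⟩ := hf.extend_real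
  refine ⟨g x, ((hg.continuous.tendsto x).mono_left nhdsWithin_le_nhds).congr' ?_⟩
  filter_upwards [self_mem_nhdsWithin] with y hy
  exact (hfg hy).symm

theorem exists_tendsto_nhdsLT_of_hasDerivAt_of_abs_le {f f' : ℝ → ℝ} {a b M : ℝ} (hab : a < b)
    (hf : ∀ x ∈ Ico a b, HasDerivAt f (f' x) x) (hM : ∀ x ∈ Ico a b, |f' x| ≤ M) :
    ∃ L, Tendsto f (𝓝[<] b) (𝓝 L) := by
  have hLip : LipschitzOnWith M.toNNReal f (Ico a b) :=
    (convex_Ico a b).lipschitzOnWith_of_nnnorm_hasDerivWithin_le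
      (fun x hx => (hf x hx).hasDerivWithinAt) fun x hx => by
        rw [← NNReal.coe_le_coe, coe_nnnorm, Real.norm_eq_abs]
        exact (hM x hx).trans (Real.le_coe_toNNReal M)
  rw [← nhdsWithin_Ico_eq_nhdsLT hab]
  exact hLip.exists_tendsto_nhdsWithin b

theorem le_gronwallBound_of_hasDerivAt_le {f f' : ℝ → ℝ} {a b K ε : ℝ} (hK : 0 ≤ K)
    (hε : 0 ≤ ε) (hfa : 0 ≤ f a) (hf : ∀ x ∈ Ico a b, HasDerivAt f (f' x) x)
    (bound : ∀ x ∈ Ico a b, f' x ≤ K * f x + ε) :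
    ∀ x ∈ Ico a b, f x ≤ gronwallBound (f a) K ε (b - a) := by
  intro x hx
  have hsub : Icc a x ⊆ Ico a b := Icc_subset_Ico_right hx.2
  calc f x ≤ gronwallBound (f a) K ε (x - a) :=
        le_gronwallBound_of_liminf_deriv_right_le
          (fun y hy => (hf y (hsub hy)).continuousAt.continuousWithinAt)
          (fun y hy _ hr => (hf y (hsub (Ico_subset_Icc_self hy))).hasDerivWithinAt
            |>.liminf_right_slope_le hr)
          le_rfl (fun y hy => bound y (hsub (Ico_subset_Icc_self hy))) x (right_mem_Icc.2 hx.1)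
    _ ≤ gronwallBound (f a) K ε (b - a) :=
        gronwallBound_mono hfa hε hK (by linarith [hx.2])

theorem energy_deriv_le {q τ x v w y A : ℝ} (hτ : τ < 0)
    (hode : w - 2 / τ * v + q ^ 2 * x = y) (hy : |y| ≤ A) :
    2 * v * w + 2 * q ^ 2 * x * v ≤ A * (v ^ 2 + q ^ 2 * x ^ 2) + A := by
  have hfriction : 4 / τ * v ^ 2 ≤ 0 :=
    mul_nonpos_of_nonpos_of_nonneg (div_nonpos_of_nonneg_of_nonpos (by norm_num) hτ.le)
      (sq_nonneg v)
  have hsource : 2 * v * y ≤ A * v ^ 2 + A :=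
    calc 2 * v * y ≤ 2 * |v| * |y| := by
          rw [mul_assoc, mul_assoc, ← abs_mul]; gcongr; exact le_abs_self _
      _ ≤ 2 * |v| * A := by gcongr
      _ ≤ A * v ^ 2 + A := by
          nlinarith [sq_nonneg (|v| - 1), sq_abs v, (abs_nonneg y).trans hy]
  have hw : w = 2 / τ * v + y - q ^ 2 * x := by linarith
  have hpotential : 0 ≤ A * (q ^ 2 * x ^ 2) := mul_nonneg ((abs_nonneg y).trans hy) (by positivity)
  calc 2 * v * w + 2 * q ^ 2 * x * v = 4 / τ * v ^ 2 + 2 * v * y := by rw [hw]; ring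
    _ ≤ A * (v ^ 2 + q ^ 2 * x ^ 2) + A := by nlinarith

theorem exists_abs_deriv_le_of_ode {q a A : ℝ} {p p' p'' g : ℝ → ℝ} (ha : a < 0)
    (hp : ∀ τ ∈ Ico a 0, HasDerivAt p (p' τ) τ) (hp' : ∀ τ ∈ Ico a 0, HasDerivAt p' (p'' τ) τ)
    (hODE : ∀ τ ∈ Ico a 0, p'' τ - (2 / τ) * p' τ + q ^ 2 * p τ = g τ)
    (hg : ∀ τ ∈ Ico a 0, |g τ| ≤ A) :
    ∃ M, ∀ τ ∈ Ico a 0, |p' τ| ≤ M := by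
  set E : ℝ → ℝ := fun τ => p' τ ^ 2 + q ^ 2 * p τ ^ 2
  have hA : 0 ≤ A := (abs_nonneg _).trans (hg a (left_mem_Ico.2 ha))
  have hE : ∀ τ ∈ Ico a 0, HasDerivAt E (2 * p' τ * p'' τ + 2 * q ^ 2 * p τ * p' τ) τ := by
    intro τ hτ
    exact (((hp' τ hτ).fun_pow 2).add (((hp τ hτ).fun_pow 2).const_mul (q ^ 2))).congr_deriv
      (by push_cast; ring)
  have hbound := le_gronwallBound_of_hasDerivAt_le hA hA (by positivity) hE
    fun τ hτ => energy_deriv_le hτ.2 (hODE τ hτ) (hg τ hτ)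
  refine ⟨√(gronwallBound (E a) A A (0 - a)), fun τ hτ => Real.abs_le_sqrt ?_⟩
  calc p' τ ^ 2 ≤ E τ := le_add_of_nonneg_right (by positivity)
    _ ≤ _ := hbound τ hτ

theorem stmt8_general (q G δ : ℝ) (hδ : 0 < δ) (g p p' p'' : ℝ → ℝ)
    (hgG : ∃ C, ∀ τ ∈ Set.Ioo (-δ) 0, |g τ - G| ≤ C * τ ^ 2)
    (hp : ∀ τ ∈ Set.Ioo (-δ) 0, HasDerivAt p (p' τ) τ)
    (hp' : ∀ τ ∈ Set.Ioo (-δ) 0, HasDerivAt p' (p'' τ) τ)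
    (hODE : ∀ τ ∈ Set.Ioo (-δ) 0, p'' τ - (2 / τ) * p' τ + q ^ 2 * p τ = g τ) :
    ∃ L, Tendsto p (nhdsWithin 0 (Set.Iio 0)) (nhds L) := by
  obtain ⟨C, hC⟩ := hgG
  have ha : -δ / 2 < 0 := by linarith
  have hsub : Ico (-δ / 2) 0 ⊆ Ioo (-δ) 0 := fun τ hτ => ⟨by linarith [hτ.1], hτ.2⟩
  have hg : ∀ τ ∈ Ico (-δ / 2) 0, |g τ| ≤ |G| + |C| * δ ^ 2 := fun τ hτ =>
    abs_le_add_of_abs_sub_le_mul_sq (hC τ (hsub hτ))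
      (abs_le.2 ⟨by linarith [hτ.1], by linarith [hτ.2]⟩)
  obtain ⟨M, hM⟩ := exists_abs_deriv_le_of_ode ha (fun τ hτ => hp τ (hsub hτ))
    (fun τ hτ => hp' τ (hsub hτ)) (fun τ hτ => hODE τ (hsub hτ)) hg
  exact exists_tendsto_nhdsLT_of_hasDerivAt_of_abs_le ha (fun τ hτ => hp τ (hsub hτ)) hM

/-- a solution of π'' - (2/τ)π' + q²π = g with g = G + O(τ²) as τ → 0⁻,
bounded near 0, converges to a finite limit as τ → 0⁻. -/
theorem stmt8 (q G δ : ℝ) (hq : 0 < q) (hδ : 0 < δ) (g p p' p'' : ℝ → ℝ)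
    (hg : ContinuousOn g (Set.Ioo (-δ) 0))
    (hgG : ∃ C, ∀ τ ∈ Set.Ioo (-δ) 0, |g τ - G| ≤ C * τ ^ 2)
    (hp : ∀ τ ∈ Set.Ioo (-δ) 0, HasDerivAt p (p' τ) τ)
    (hp' : ∀ τ ∈ Set.Ioo (-δ) 0, HasDerivAt p' (p'' τ) τ)
    (hODE : ∀ τ ∈ Set.Ioo (-δ) 0, p'' τ - (2 / τ) * p' τ + q ^ 2 * p τ = g τ)
    (hbdd : ∃ δ' M, 0 < δ' ∧ ∀ τ ∈ Set.Ioo (-δ') 0, |p τ| ≤ M) :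
    ∃ L, Tendsto p (nhdsWithin 0 (Set.Iio 0)) (nhds L) :=
  stmt8_general q G δ hδ g p p' p'' hgG hp hp' hODE
end
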